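/- arXiv:1601.06688 — 4 statements merged into one kernel-verified Lean document; each statement's English description precedes it below -/
import Mathlib

section
/- Let m ≥ n ≥ 1, fix an n-element subset L ⊆ {1,…,m}, and let α ≥ 0 be an integer. Then ∑_K d_K · ∂_K( d_L^α ) = ( ∏_{i=0}^{n−1} (α+i) ) · d_L^α in S, where the sum ranges over all n-element subsets K of {1,…,m}. -/
/-!
`d_L^α` involves only the variables in the rows of `L`, while every term of `∂_K` differentiates
once in each row of `K`; so `∂_K (d_L^α) = 0` unless `K = L`, and what remains is Cayley's
identity `det(∂) det(X)^(p+1) = (p+1)(p+2)⋯(p+n) det(X)^p` for the square matrix `X` on the rows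
of `L`. It is proved for the operator `det(∂_{a, u b})_{a, b ∈ S}` of an arbitrary set `S` of
rows, whose value on `det(X)^(p+1)` is `(p+1)⋯(p+|S|)` times `det(X)^p` times a signed
complementary minor, by induction on `S`: expand the operator along a new row `i`, differentiate
the induction hypothesis, and recombine the terms with a Laplace-type relation between
complementary minors and the adjugate of `X`.
-/

open MvPolynomial

theorem pderiv_comm' {σ : Type*} {R : Type*} [CommSemiring R] (i j : σ) (f : MvPolynomial σ R) :
    pderiv i (pderiv j f) = pderiv j (pderiv i f) := by
  have h1 : ∀ a b c : σ, pderiv a ((pderiv b) (X c : MvPolynomial σ R)) = 0 := by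
    intro a b c
    rcases eq_or_ne c b with rfl | h
    · simp [pderiv_X_self]
    · simp [pderiv_X_of_ne h]
  induction f using MvPolynomial.induction_on with
  | C a => simp
  | add f g hf hg => simp [hf, hg]
  | mul_X f k hf => simp only [pderiv_mul, map_add, hf, h1]; ring

theorem pderiv_commute {σ : Type*} (a b : σ) :
    Commute ((pderiv a).toLinearMap : Module.End ℂ (MvPolynomial σ ℂ))
      ((pderiv b).toLinearMap) := by
  apply LinearMap.ext
  intro f
  exact pderiv_comm' a b f

/-- The differential operator corresponding to the monomial `m`:
the composition of the partial derivatives `∂/∂xᵢ`, each taken `m i` times. -/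
noncomputable def monOp {σ : Type*} (m : σ →₀ ℕ) : Module.End ℂ (MvPolynomial σ ℂ) :=
  m.support.noncommProd
    (fun i => ((pderiv i).toLinearMap : Module.End ℂ (MvPolynomial σ ℂ)) ^ (m i))
    (fun a _ b _ _ => (pderiv_commute a b).pow_pow _ _)

/-- The differential operator obtained from a polynomial `p` by substituting the
(commuting) partial derivative `∂/∂xᵢ` for each variable `xᵢ`, applied to `f`. -/
noncomputable def diffOp {σ : Type*} (p f : MvPolynomial σ ℂ) : MvPolynomial σ ℂ :=
  ∑ m ∈ p.support, p.coeff m • monOp m f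

/-- The maximal minor `d_K` of the generic `m × n` matrix `(x_{ij})`, on the rows
indexed by an `n`-element subset `K ⊆ {1,…,m}` taken in increasing order
(defined to be `0` if `K` does not have exactly `n` elements). -/
noncomputable def dmin (m n : ℕ) (K : Finset (Fin m)) : MvPolynomial (Fin m × Fin n) ℂ :=
  if h : K.card = n then
    Matrix.det (Matrix.of fun a j : Fin n => X ((K.orderIsoOfFin h a : Fin m), j))
  else 0

open Finset Matrix

namespace Derivation

variable {R A κ : Type*} [CommRing R] [CommRing A] [Algebra R A] [Fintype κ] [DecidableEq κ]
  (D : Derivation R A A)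

theorem map_det_eq_zero {M : Matrix κ κ A} (h : ∀ i j, D (M i j) = 0) : D M.det = 0 := by
  rw [det_apply, map_sum]
  refine sum_eq_zero fun σ _ => ?_
  rw [Units.smul_def, map_zsmul, prod_induction _ (fun x => D x = 0) (fun a b ha hb => by
    rw [leibniz, ha, hb, smul_zero, smul_zero, add_zero]) D.map_one_eq_zero (fun i _ => h _ _),
    smul_zero]

theorem map_det_eq_det_updateRow {M : Matrix κ κ A} (i₀ : κ)
    (h : ∀ i ≠ i₀, ∀ j, D (M i j) = 0) :
    D M.det = (M.updateRow i₀ fun j => D (M i₀ j)).det := by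
  -- expand along row `i₀`: the cofactors do not involve that row, so `D` kills them
  have h_adj : ∀ j, D (adjugate M j i₀) = 0 := fun j => by
    rw [adjugate_apply]
    refine D.map_det_eq_zero fun i k => ?_
    rcases eq_or_ne i i₀ with rfl | hi
    · rw [updateRow_self, Pi.single_apply]
      split_ifs
      exacts [D.map_one_eq_zero, D.map_zero]
    · rw [updateRow_ne hi, h i hi]
  rw [det_eq_sum_mul_adjugate_row (M.updateRow _ _) i₀, det_eq_sum_mul_adjugate_row M i₀,
    map_sum]
  refine sum_congr rfl fun j _ => ?_
  rw [leibniz, h_adj, smul_zero, zero_add, smul_eq_mul, mul_comm, updateRow_self, adjugate_apply,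
    adjugate_apply, updateRow_idem]

end Derivation

section DiffOp

open scoped IsMulCommutative

variable {R σ : Type*} [CommRing R]

/- The partial derivatives commute, so they generate a commutative subalgebra of
`Module.End`, into which `aeval` can substitute `∂_v` for `X v`. -/
variable (R σ) in
noncomputable def pderivAlgebra : Subalgebra R (Module.End R (MvPolynomial σ R)) :=
  Algebra.adjoin R (Set.range fun v : σ => (pderiv v).toLinearMap)

instance : IsMulCommutative (pderivAlgebra R σ) :=
  Algebra.isMulCommutative_adjoin R <| by
    rintro _ ⟨a, rfl⟩ _ ⟨b, rfl⟩
    exact LinearMap.ext (pderiv_comm' a b)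

noncomputable def toDiffOp : MvPolynomial σ R →ₐ[R] Module.End R (MvPolynomial σ R) :=
  (pderivAlgebra R σ).val.comp <| aeval fun v => ⟨_, Algebra.subset_adjoin ⟨v, rfl⟩⟩

@[simp] theorem toDiffOp_X (v : σ) (f : MvPolynomial σ R) : toDiffOp (X v) f = pderiv v f := by
  simp [toDiffOp]

theorem toDiffOp_mul_apply (p q f : MvPolynomial σ R) :
    toDiffOp (p * q) f = toDiffOp p (toDiffOp q f) := by
  rw [map_mul, Module.End.mul_apply]

theorem toDiffOp_monomial_one (m : σ →₀ ℕ) : toDiffOp (monomial m (1 : ℂ)) = monOp m := by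
  rw [monomial_eq, C_1, one_mul, Finsupp.prod, toDiffOp, AlgHom.comp_apply, map_prod]
  simp only [map_pow, aeval_X]
  rw [← noncommProd_eq_prod]
  exact map_noncommProd _ _ _ (pderivAlgebra ℂ σ).val

theorem diffOp_eq_toDiffOp (p f : MvPolynomial σ ℂ) : diffOp p f = toDiffOp p f := by
  conv_rhs => rw [p.as_sum]
  simp only [diffOp, map_sum, LinearMap.sum_apply]
  refine sum_congr rfl fun m _ => ?_
  rw [show monomial m (coeff m p) = coeff m p • monomial m 1 by
    rw [smul_monomial, smul_eq_mul, mul_one], map_smul, toDiffOp_monomial_one, LinearMap.smul_apply]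

end DiffOp

section Minors

variable {R ι κ : Type*} [CommRing R] [DecidableEq κ] {e : κ → ι} {S : Finset κ} {i j : κ}

theorem pderiv_X_mk_self (x : ι) (b c : κ) :
    pderiv (x, c) (X (x, b)) = (Pi.single c 1 : κ → MvPolynomial (ι × κ) R) b := by
  rcases eq_or_ne b c with rfl | hbc
  · rw [pderiv_X_self, Pi.single_eq_same]
  · rw [pderiv_X_of_ne (by simpa using hbc), Pi.single_eq_of_ne hbc]

noncomputable def genericMinor (e : κ → ι) : Matrix κ κ (MvPolynomial (ι × κ) R) :=
  of fun a b => X (e a, b)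

/- With `X = genericMinor e`: `toDiffOp` of `det (paddedMinor e S u)` is the operator
`det (∂_(e a, u b))_{a, b ∈ S}`, and `det (complementMinor e S u)` is, for `u` injective on `S`,
up to sign the minor of `X` on the rows outside `S` and the columns outside `u '' S`. -/
noncomputable def paddedMinor (e : κ → ι) (S : Finset κ) (u : κ → κ) :
    Matrix κ κ (MvPolynomial (ι × κ) R) :=
  of fun a b => if a ∈ S then X (e a, u b) else (1 : Matrix κ κ _) a b

noncomputable def complementMinor (e : κ → ι) (S : Finset κ) (u : κ → κ) :
    Matrix κ κ (MvPolynomial (ι × κ) R) :=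
  of fun a b =>
    if a ∈ S then (Pi.single (u a) 1 : κ → MvPolynomial (ι × κ) R) b else X (e a, b)

theorem updateRow_paddedMinor_insert (u : κ → κ) (r : κ → MvPolynomial (ι × κ) R) :
    (paddedMinor e (insert i S) u).updateRow i r = (paddedMinor e S u).updateRow i r := by
  refine Matrix.ext fun a b => ?_
  rcases eq_or_ne a i with rfl | ha
  · simp
  · simp [paddedMinor, ha]

theorem paddedMinor_comp_swap (hi : i ∉ S) (hj : j ∈ S) (u : κ → κ) :
    paddedMinor (R := R) e S (u ∘ Equiv.swap i j) =
      ((paddedMinor e S u).updateRow i (Pi.single j 1)).submatrix id (Equiv.swap i j) := by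
  refine Matrix.ext fun a b => ?_
  rcases eq_or_ne a i with rfl | hai
  · have h_swap : Equiv.swap a j b = j ↔ a = b := by
      rw [Equiv.swap_apply_eq_iff, Equiv.swap_apply_right, eq_comm]
    simp only [paddedMinor, of_apply, if_neg hi, one_apply, submatrix_apply, id, updateRow_self,
      Pi.single_apply, h_swap]
  by_cases haS : a ∈ S
  · simp [paddedMinor, hai, haS]
  · have haj : a ≠ j := by rintro rfl; exact haS hj
    have h_swap : a = Equiv.swap i j b ↔ a = b := by
      rw [eq_comm, Equiv.swap_apply_eq_iff, Equiv.swap_apply_of_ne_of_ne hai haj, eq_comm]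
    simp [paddedMinor, hai, haS, one_apply, h_swap]

theorem updateRow_complementMinor_of_notMem (hi : i ∉ S) (u : κ → κ) :
    (complementMinor (R := R) e S u).updateRow i (Pi.single (u i) 1) =
      complementMinor e (insert i S) u := by
  refine Matrix.ext fun a b => ?_
  rcases eq_or_ne a i with rfl | ha
  · simp [complementMinor]
  · simp [complementMinor, ha]

theorem updateRow_complementMinor_of_mem (hi : i ∉ S) (hj : j ∈ S) (u : κ → κ) :
    (complementMinor (R := R) e S u).updateRow j (Pi.single (u i) 1) =
      complementMinor e S (u ∘ Equiv.swap i j) := by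
  have hij : i ≠ j := by rintro rfl; exact hi hj
  refine Matrix.ext fun a b => ?_
  rcases eq_or_ne a j with rfl | haj
  · simp [complementMinor, hj]
  · rcases eq_or_ne a i with rfl | hai
    · simp [complementMinor, haj, hi]
    · simp [complementMinor, haj, Equiv.swap_apply_of_ne_of_ne hai haj]

variable [Fintype κ]

theorem det_paddedMinor_insert (hi : i ∉ S) (u : κ → κ) :
    (paddedMinor (R := R) e (insert i S) u).det =
      X (e i, u i) * (paddedMinor e S u).det -
        ∑ j ∈ S, X (e i, u j) * (paddedMinor e S (u ∘ Equiv.swap i j)).det := by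
  set P := paddedMinor (R := R) e S u
  have h_self : (P.updateRow i (Pi.single i 1)).det = P.det := by
    congr
    refine Matrix.ext fun a b => ?_
    rcases eq_or_ne a i with rfl | ha
    · simp [P, paddedMinor, hi, one_apply, Pi.single_apply, eq_comm]
    · simp [ha]
  have h_out : ∀ j ∉ insert i S, (P.updateRow i (Pi.single j 1)).det = 0 := fun j hj => by
    rw [mem_insert, not_or] at hj
    refine det_zero_of_row_eq (Ne.symm hj.1) (funext fun b => ?_)
    simp [P, paddedMinor, hj.1, hj.2, one_apply, Pi.single_apply, eq_comm]
  have h_mem : ∀ j ∈ S, (P.updateRow i (Pi.single j 1)).det =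
      -(paddedMinor e S (u ∘ Equiv.swap i j)).det := fun j hj => by
    have hij : i ≠ j := by rintro rfl; exact hi hj
    rw [paddedMinor_comp_swap hi hj, det_permute', Equiv.Perm.sign_swap hij]
    simp [P]
  have h_entry : ∀ j, paddedMinor (R := R) e (insert i S) u i j = X (e i, u j) := by
    simp [paddedMinor]
  rw [det_eq_sum_mul_adjugate_row _ i]
  simp only [adjugate_apply, updateRow_paddedMinor_insert, h_entry]
  rw [← sum_subset (subset_univ (insert i S)) fun j _ hj => by rw [h_out j hj, mul_zero],
    sum_insert hi, h_self, sum_congr rfl fun j hj => by rw [h_mem j hj, mul_neg], sum_neg_distrib,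
    sub_eq_add_neg]

theorem det_complementMinor_comp_swap (hi : i ∈ S) (hj : j ∈ S) (hij : i ≠ j)
    (u : κ → κ) :
    (complementMinor (R := R) e S (u ∘ Equiv.swap i j)).det = -(complementMinor e S u).det := by
  have h_swap : complementMinor (R := R) e S (u ∘ Equiv.swap i j) =
      (complementMinor e S u).submatrix (Equiv.swap i j) id := by
    refine Matrix.ext fun a b => ?_
    rcases eq_or_ne a i with rfl | hai
    · simp [complementMinor, hi, hj]
    rcases eq_or_ne a j with rfl | haj
    · simp [complementMinor, hi, hj]
    · simp [complementMinor, Equiv.swap_apply_of_ne_of_ne hai haj]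
  rw [h_swap, det_permute, Equiv.Perm.sign_swap hij]
  simp

theorem det_complementMinor_mul_adjugate (hi : i ∉ S) (u : κ → κ) :
    (complementMinor (R := R) e S u).det * adjugate (genericMinor e) (u i) i =
      ∑ j ∈ S,
          (complementMinor e S (u ∘ Equiv.swap i j)).det * adjugate (genericMinor e) (u j) i +
        (complementMinor e (insert i S) u).det * (genericMinor e).det := by
  set N := complementMinor (R := R) e S u
  set Y := genericMinor (R := R) e
  have h_out : ∀ j ∉ S, (N * adjugate Y) j i = if j = i then Y.det else 0 := fun j hj => by
    have h_row : N j = Y j := funext fun b => by simp [N, Y, complementMinor, genericMinor, hj]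
    rw [show (N * adjugate Y) j i = (Y * adjugate Y) j i by simp only [mul_apply, h_row],
      mul_adjugate, Matrix.smul_apply, one_apply, smul_eq_mul, mul_ite, mul_one, mul_zero]
  have h_mem : ∀ j ∈ S, (N * adjugate Y) j i = adjugate Y (u j) i := fun j hj => by
    simp [N, complementMinor, hj, mul_apply, Pi.single_apply]
  -- the `(u i, i)` entry of `adj N * N * adj Y`, computed in two ways
  have h_assoc := congrFun (congrFun (Matrix.mul_assoc (adjugate N) N (adjugate Y)) (u i)) i
  rw [adjugate_mul, smul_mul, Matrix.one_mul, Matrix.smul_apply, smul_eq_mul, mul_apply] at h_assoc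
  rw [h_assoc, ← sum_subset (subset_univ (insert i S)) fun j _ hj => by
      rw [mem_insert, not_or] at hj
      rw [h_out j hj.2, if_neg hj.1, mul_zero],
    sum_insert hi, add_comm, h_out i hi, if_pos rfl, adjugate_apply,
    updateRow_complementMinor_of_notMem hi]
  congr 1
  refine sum_congr rfl fun j hj => ?_
  rw [h_mem j hj, adjugate_apply, updateRow_complementMinor_of_mem hi hj]

theorem pderiv_det_genericMinor (he : Function.Injective e) (i c : κ) :
    pderiv (e i, c) (genericMinor (R := R) e).det = adjugate (genericMinor e) c i := by
  rw [(pderiv _).map_det_eq_det_updateRow (M := genericMinor e) i fun a ha _ =>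
    pderiv_X_of_ne (by simp [he.ne ha]), adjugate_apply]
  congr 2
  funext b
  exact pderiv_X_mk_self _ _ _

theorem pderiv_det_genericMinor_of_notMem_range {x : ι} (hx : x ∉ Set.range e) (c : κ) :
    pderiv (x, c) (genericMinor (R := R) e).det = 0 :=
  (pderiv _).map_det_eq_zero fun a _ => pderiv_X_of_ne fun h => hx ⟨a, congrArg Prod.fst h⟩

theorem pderiv_det_complementMinor (he : Function.Injective e) (hi : i ∉ S) (u : κ → κ) :
    pderiv (e i, u i) (complementMinor (R := R) e S u).det =
      (complementMinor e (insert i S) u).det := by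
  rw [(pderiv _).map_det_eq_det_updateRow (M := complementMinor e S u) i fun a ha b => ?_,
    ← updateRow_complementMinor_of_notMem hi]
  · congr 2
    funext b
    simp [complementMinor, hi, pderiv_X_mk_self]
  · by_cases haS : a ∈ S
    · simp only [complementMinor, of_apply, if_pos haS, Pi.single_apply]
      split_ifs
      exacts [pderiv_one, (pderiv _).map_zero]
    · simp only [complementMinor, of_apply, if_neg haS]
      exact pderiv_X_of_ne (by simp [he.ne ha])

theorem pderiv_det_complementMinor_mul_pow (he : Function.Injective e) (hi : i ∉ S)
    (u : κ → κ) (p : ℕ) :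
    pderiv (e i, u i) ((complementMinor (R := R) e S u).det * (genericMinor e).det ^ p) =
      (complementMinor e (insert i S) u).det * (genericMinor e).det ^ p +
        (p : MvPolynomial (ι × κ) R) * (genericMinor e).det ^ (p - 1) *
          ((complementMinor e S u).det * adjugate (genericMinor e) (u i) i) := by
  rw [pderiv_mul, pderiv_det_complementMinor he hi, pderiv_pow, pderiv_det_genericMinor he]
  ring

theorem toDiffOp_det_paddedMinor_apply_pow (he : Function.Injective e) (S : Finset κ)
    (u : κ → κ) (p : ℕ) :
    toDiffOp (paddedMinor (R := R) e S u).det ((genericMinor e).det ^ (p + 1)) =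
      (∏ t ∈ range #S, (p + 1 + t)) •
        ((complementMinor e S u).det * (genericMinor e).det ^ p) := by
  induction S using Finset.induction_on generalizing u with
  | empty =>
    have h_padded : paddedMinor (R := R) e ∅ u = 1 := by
      ext1 a b; simp [paddedMinor]
    have h_compl : complementMinor (R := R) e ∅ u = genericMinor e := by
      ext1 a b; simp [complementMinor, genericMinor]
    rw [h_padded, h_compl, det_one, map_one, Module.End.one_apply, card_empty, range_zero,
      prod_empty, one_smul, pow_succ']
  | @insert i S hi IH =>
    set F := (genericMinor (R := R) e).det
    set r := ∏ t ∈ range #S, (p + 1 + t)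
    have h_swap : ∀ j ∈ S,
        pderiv (e i, u j) (r • ((complementMinor e S (u ∘ Equiv.swap i j)).det * F ^ p)) =
          r • (-(complementMinor e (insert i S) u).det * F ^ p +
            (p : MvPolynomial (ι × κ) R) * F ^ (p - 1) *
              ((complementMinor e S (u ∘ Equiv.swap i j)).det *
                adjugate (genericMinor e) (u j) i)) := fun j hj => by
      have hij : i ≠ j := by rintro rfl; exact hi hj
      have h := pderiv_det_complementMinor_mul_pow (R := R) he hi (u ∘ Equiv.swap i j) p
      simp only [Function.comp_apply, Equiv.swap_apply_left] at h
      rw [map_nsmul, h, det_complementMinor_comp_swap (mem_insert_self i S)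
        (mem_insert_of_mem hj) hij]
    rw [det_paddedMinor_insert hi, map_sub, map_sum, LinearMap.sub_apply, LinearMap.sum_apply,
      toDiffOp_mul_apply, toDiffOp_X, IH, map_nsmul, pderiv_det_complementMinor_mul_pow he hi,
      sum_congr rfl fun j hj => by rw [toDiffOp_mul_apply, toDiffOp_X, IH, h_swap j hj],
      ← smul_sum, sum_add_distrib, sum_const, ← mul_sum, ← smul_sub,
      card_insert_of_notMem hi, prod_range_succ, mul_smul]
    congr 1
    have h_adj := det_complementMinor_mul_adjugate (R := R) (e := e) hi u
    have h_pow : (p : MvPolynomial (ι × κ) R) * F ^ (p - 1) * F = p * F ^ p := by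
      rcases eq_or_ne p 0 with rfl | hp
      · simp
      · rw [mul_assoc, pow_sub_one_mul hp]
    simp only [nsmul_eq_mul]
    push_cast
    linear_combination (p : MvPolynomial (ι × κ) R) * F ^ (p - 1) * h_adj +
      (complementMinor e (insert i S) u).det * h_pow

theorem toDiffOp_det_genericMinor_apply_pow (he : Function.Injective e) (p : ℕ) :
    toDiffOp (genericMinor (R := R) e).det ((genericMinor e).det ^ (p + 1)) =
      (∏ t ∈ range (Fintype.card κ), (p + 1 + t)) • (genericMinor e).det ^ p := by
  have h_padded : paddedMinor (R := R) e univ id = genericMinor e := by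
    ext1 a b; simp [paddedMinor, genericMinor]
  have h_compl : complementMinor (R := R) e univ id = 1 := by
    ext1 a b; simp [complementMinor, one_apply, Pi.single_apply, eq_comm]
  simpa [h_padded, h_compl] using toDiffOp_det_paddedMinor_apply_pow (R := R) he univ id p

theorem toDiffOp_det_genericMinor_apply_eq_zero {g : MvPolynomial (ι × κ) R} (b : κ)
    (hg : ∀ c, pderiv (e b, c) g = 0) : toDiffOp (genericMinor (R := R) e).det g = 0 := by
  rw [det_eq_sum_mul_adjugate_row _ b, map_sum, LinearMap.sum_apply]
  refine sum_eq_zero fun c _ => ?_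
  rw [mul_comm, toDiffOp_mul_apply, genericMinor, of_apply, toDiffOp_X, hg, map_zero]

end Minors

theorem dmin_eq_det_genericMinor {m n : ℕ} {K : Finset (Fin m)} (hK : K.card = n) :
    dmin m n K = (genericMinor (K.orderEmbOfFin hK)).det := by
  rw [dmin, dif_pos hK]
  rfl

theorem maximal_minors_cayley_identity_general (m n : ℕ) (hn : 1 ≤ n)
    (L : Finset (Fin m)) (hL : L.card = n) (α : ℕ) :
    ∑ K ∈ Finset.powersetCard n (Finset.univ : Finset (Fin m)),
      dmin m n K * diffOp (dmin m n K) (dmin m n L ^ α)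
    = (∏ i ∈ Finset.range n, (α + i)) • dmin m n L ^ α := by
  have hL_mem : L ∈ powersetCard n (univ : Finset (Fin m)) :=
    mem_powersetCard.2 ⟨subset_univ L, hL⟩
  have h_indep : ∀ x ∉ L, ∀ c, pderiv (x, c) (dmin m n L ^ α) = 0 := fun x hx c => by
    rw [dmin_eq_det_genericMinor hL, pderiv_pow,
      pderiv_det_genericMinor_of_notMem_range (by simpa using hx), mul_zero]
  rw [sum_eq_single_of_mem L hL_mem fun K hK hKL => ?_, diffOp_eq_toDiffOp,
    dmin_eq_det_genericMinor hL]
  · rcases α with _ | p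
    · rw [pow_zero, toDiffOp_det_genericMinor_apply_eq_zero ⟨0, hn⟩ fun _ => pderiv_one,
        mul_zero, prod_eq_zero (mem_range.2 hn) (zero_add 0), zero_smul]
    · rw [toDiffOp_det_genericMinor_apply_pow (L.orderEmbOfFin hL).injective, Fintype.card_fin,
        mul_smul_comm, ← pow_succ']
  · obtain ⟨-, hK⟩ := mem_powersetCard.1 hK
    obtain ⟨x, hxK, hxL⟩ := not_subset.1 fun h =>
      hKL (eq_of_subset_of_card_le h (hL.trans hK.symm).le)
    obtain ⟨b, rfl⟩ : x ∈ Set.range (K.orderEmbOfFin hK) := by simpa using hxK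
    rw [dmin_eq_det_genericMinor hK, diffOp_eq_toDiffOp,
      toDiffOp_det_genericMinor_apply_eq_zero b (h_indep _ hxL), mul_zero]

/-- For a fixed `n`-element subset `L ⊆ {1,…,m}` and an integer `α ≥ 0`,
`∑_K d_K ⬝ ∂_K(d_L^α) = (∏_{i=0}^{n-1} (α+i)) ⬝ d_L^α`. -/
theorem maximal_minors_cayley_identity (m n : ℕ) (hn : 1 ≤ n) (hmn : n ≤ m)
    (L : Finset (Fin m)) (hL : L.card = n) (α : ℕ) :
    ∑ K ∈ Finset.powersetCard n (Finset.univ : Finset (Fin m)),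
      dmin m n K * diffOp (dmin m n K) (dmin m n L ^ α)
    = (∏ i ∈ Finset.range n, (α + i)) • dmin m n L ^ α :=
  maximal_minors_cayley_identity_general m n hn L hL α
end

section
/- (Cayley's identity.) Let n ≥ 1, let X = (x_{ij}) be the generic n×n matrix over ℂ[x_{ij} : 1 ≤ i,j ≤ n], and let det(∂) = det((∂/∂x_{ij})_{i,j}) be the differential operator obtained by replacing each variable x_{ij} by ∂/∂x_{ij} in the determinant (unambiguous since partial derivatives commute). Then for every integer α ≥ 1: det(∂)( (det X)^α ) = α(α+1)⋯(α+n−1) · (det X)^{α−1}. -/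
/-!
Write `Δ = det X` and `Y = adj X`. Jacobi's formula `∂Δ/∂x_{ab} = Y_{ba}` and its consequence
`Δ · ∂Y_{kl}/∂x_{ab} = Y_{kl} Y_{ba} - Y_{ka} Y_{bl}` keep every derivative of `Δ^α` inside the
ring generated by `Δ` and the entries of `Y`, once powers of `Δ` are cleared.

For a set `S` of columns and a permutation `σ`, let `F(S, σ)` be the signed sum, over the
permutations `u` of `S`, of `∏_{i ∈ S} ∂/∂x_{σ u i, i}` applied to `Δ^α`, and `G(S, σ)` the same
signed sum of `∏_{i ∈ S} Y_{i, σ u i}`: both are minors, of `(∂/∂x_{ij})` and of `Yᵀ`. Expanding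
along a new column `i₀`, induction on `S` gives `Δ^|S| F(S, σ) = α(α+1)⋯(α+|S|-1) Δ^α G(S, σ)`: the
new factor `α + |S|` collects `α` copies of `G` from differentiating `Δ^α` and `|S|` more from
differentiating the entries of `Y`, which reassemble into `G` after swapping two rows. For `S` the
set of all columns, `F` is `det(∂) Δ^α` and `Δ G = Δ det Y = Δ^n`.
-/

open MvPolynomial

open Finset Matrix Equiv
open Equiv.Perm (sign)

theorem Derivation.leibniz_finset_prod {R A N ι : Type*} [CommSemiring R] [CommSemiring A]
    [Algebra R A] [AddCommMonoid N] [Module A N] [Module R N] [DecidableEq ι]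
    (D : Derivation R A N) (s : Finset ι) (f : ι → A) :
    D (∏ i ∈ s, f i) = ∑ i ∈ s, (∏ j ∈ s.erase i, f j) • D (f i) := by
  induction s using Finset.induction_on with
  | empty => simp
  | insert a s ha ih =>
    rw [prod_insert ha, Derivation.leibniz, ih, sum_insert ha, erase_insert ha, smul_sum, add_comm]
    congr 1
    refine sum_congr rfl fun i hi => ?_
    rw [erase_insert_of_ne (ne_of_mem_of_not_mem hi ha).symm,
      prod_insert fun h => ha (mem_of_mem_erase h), mul_smul]

theorem Derivation.map_det_eq_zero_s2 {R A m : Type*} [CommRing R] [CommRing A] [Algebra R A]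
    [Fintype m] [DecidableEq m] (D : Derivation R A A) {M : Matrix m m A}
    (h : ∀ i j, D (M i j) = 0) : D M.det = 0 := by
  rw [det_apply, map_sum]
  refine sum_eq_zero fun σ _ => ?_
  rw [Units.smul_def, map_zsmul, D.leibniz_finset_prod, sum_eq_zero fun i _ => by rw [h, smul_zero],
    smul_zero]

theorem Derivation.mul_apply_pow {R A : Type*} [CommSemiring R] [CommSemiring A] [Algebra R A]
    (D : Derivation R A A) (a : A) (k : ℕ) : a * D (a ^ k) = k * a ^ k * D a := by
  cases k with
  | zero => simp
  | succ k => rw [D.leibniz_pow, Nat.add_sub_cancel, nsmul_eq_mul, smul_eq_mul]; ring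

/-- The quotient rule for `F = c Δ^{α-s} G`, with the denominators cleared. -/
theorem Derivation.pow_succ_mul_apply_of_pow_mul_eq {R A : Type*} [CommSemiring R] [CommRing A]
    [Algebra R A] (D : Derivation R A A) {Δ F G : A} {s α c : ℕ}
    (h : Δ ^ s * F = c * (Δ ^ α * G)) :
    Δ ^ (s + 1) * D F = c * (Δ ^ α * (((α : A) - s) * D Δ * G + Δ * D G)) := by
  have hD := congrArg D h
  simp only [Derivation.leibniz, D.map_natCast, smul_eq_mul, mul_zero, add_zero] at hD
  linear_combination Δ * hD + c * G * D.mul_apply_pow Δ α - F * D.mul_apply_pow Δ s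
    - s * D Δ * h

namespace Equiv.Perm

variable {α : Type*} [Fintype α] [DecidableEq α]

def supportedIn (S : Finset α) : Finset (Perm α) :=
  univ.filter (·.support ⊆ S)

variable {S : Finset α} {u v : Perm α}

theorem mem_supportedIn : u ∈ supportedIn S ↔ u.support ⊆ S := by
  simp [supportedIn]

theorem apply_eq_of_mem_supportedIn (hu : u ∈ supportedIn S) {i : α} (hi : i ∉ S) : u i = i :=
  notMem_support.1 fun h => hi (mem_supportedIn.1 hu h)

theorem apply_mem_of_mem_supportedIn (hu : u ∈ supportedIn S) {i : α} (hi : i ∈ S) : u i ∈ S := by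
  by_cases h : u i = i
  · rwa [h]
  · exact mem_supportedIn.1 hu (apply_mem_support.2 (mem_support.2 h))

theorem mul_mem_supportedIn (hu : u ∈ supportedIn S) (hv : v ∈ supportedIn S) :
    u * v ∈ supportedIn S :=
  mem_supportedIn.2 <| (support_mul_le u v).trans <|
    sup_le (mem_supportedIn.1 hu) (mem_supportedIn.1 hv)

theorem inv_mem_supportedIn (hu : u ∈ supportedIn S) : u⁻¹ ∈ supportedIn S := by
  rw [mem_supportedIn, support_inv]
  exact mem_supportedIn.1 hu

theorem swap_mem_supportedIn {i j : α} (hi : i ∈ S) (hj : j ∈ S) : swap i j ∈ supportedIn S :=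
  mem_supportedIn.2 fun k hk => by
    by_contra hkS
    exact mem_support.1 hk <|
      swap_apply_of_ne_of_ne (by rintro rfl; exact hkS hi) (by rintro rfl; exact hkS hj)

theorem supportedIn_mono {T : Finset α} (h : S ⊆ T) : supportedIn S ⊆ supportedIn T :=
  fun _ hu => mem_supportedIn.2 ((mem_supportedIn.1 hu).trans h)

theorem supportedIn_empty : supportedIn (∅ : Finset α) = {1} := by
  ext u
  simp [mem_supportedIn]

theorem supportedIn_univ : supportedIn (univ : Finset α) = univ := by
  ext u
  simp [mem_supportedIn]

theorem sum_supportedIn_mul_right {M : Type*} [AddCommMonoid M] (hv : v ∈ supportedIn S)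
    (f : Perm α → M) : ∑ u ∈ supportedIn S, f (u * v) = ∑ u ∈ supportedIn S, f u :=
  sum_nbij' (· * v) (· * v⁻¹) (fun _ hu => mul_mem_supportedIn hu hv)
    (fun _ hu => mul_mem_supportedIn hu (inv_mem_supportedIn hv)) (fun _ _ => by simp)
    (fun _ _ => by simp) fun _ _ => rfl

/-- Sorting the permutations of `insert i₀ S` by the image `j` of `i₀`. -/
theorem sum_supportedIn_insert {M : Type*} [AddCommMonoid M] {i₀ : α} (h : i₀ ∉ S)
    (f : Perm α → M) :
    ∑ u ∈ supportedIn (insert i₀ S), f u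
      = ∑ j ∈ insert i₀ S, ∑ u ∈ supportedIn S, f (swap i₀ j * u) := by
  rw [← sum_product']
  refine sum_nbij' (fun u => (u i₀, swap i₀ (u i₀) * u)) (fun p => swap i₀ p.1 * p.2)
    (fun u hu => ?_) (fun p hp => ?_) (fun u _ => swap_mul_self_mul _ _ _) (fun p hp => ?_)
    (fun u _ => by rw [swap_mul_self_mul])
  · have hmem : swap i₀ (u i₀) * u ∈ supportedIn (insert i₀ S) :=
      mul_mem_supportedIn (swap_mem_supportedIn (mem_insert_self _ _)
        (apply_mem_of_mem_supportedIn hu (mem_insert_self _ _))) hu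
    refine mem_product.2 ⟨apply_mem_of_mem_supportedIn hu (mem_insert_self _ _), ?_⟩
    rw [mem_supportedIn, ← erase_insert h]
    refine subset_erase.2 ⟨mem_supportedIn.1 hmem, fun h₀ => mem_support.1 h₀ ?_⟩
    simp
  · rw [mem_product] at hp
    exact mul_mem_supportedIn (swap_mem_supportedIn (mem_insert_self _ _) hp.1)
      (supportedIn_mono (subset_insert _ _) hp.2)
  · rw [mem_product] at hp
    have hj : (swap i₀ p.1 * p.2) i₀ = p.1 := by
      rw [mul_apply, apply_eq_of_mem_supportedIn hp.2 h, swap_apply_left]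
    simp only [hj, swap_mul_self_mul]

end Equiv.Perm

namespace Matrix

theorem prod_updateRow_of_mem {m A : Type*} [DecidableEq m] [CommMonoid A] {M : Matrix m m A}
    {S : Finset m} {i : m} (hi : i ∈ S) (r : m → A) (g : m → m) :
    ∏ k ∈ S, M.updateRow i r k (g k) = r (g i) * ∏ k ∈ S.erase i, M k (g k) := by
  rw [← mul_prod_erase S _ hi, updateRow_self]
  exact congrArg _ (prod_congr rfl fun k hk => by rw [updateRow_ne (ne_of_mem_erase hk)])

variable {m A : Type*} [Fintype m] [DecidableEq m] [CommRing A]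
  {M N : Matrix m m A} {S : Finset m} {σ : Perm m}

/-- Up to sign, the minor of `M` with rows `S` and columns `σ S`. -/
def signedMinor (M : Matrix m m A) (S : Finset m) (σ : Perm m) : A :=
  ∑ u ∈ Perm.supportedIn S, sign u • ∏ i ∈ S, M i ((σ * u) i)

theorem signedMinor_empty : signedMinor M ∅ σ = 1 := by
  simp [signedMinor, Perm.supportedIn_empty]

theorem signedMinor_univ_one : signedMinor M univ 1 = det M := by
  rw [← det_transpose, det_apply, signedMinor, Perm.supportedIn_univ]
  simp

theorem signedMinor_congr (h : ∀ i ∈ S, M i = N i) : signedMinor M S σ = signedMinor N S σ :=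
  sum_congr rfl fun u _ => by rw [prod_congr rfl fun i hi => by rw [h i hi]]

theorem signedMinor_insert {i₀ : m} (h : i₀ ∉ S) :
    signedMinor M (insert i₀ S) σ
      = ∑ j ∈ insert i₀ S, sign (Equiv.swap i₀ j) •
          (M i₀ (σ j) * signedMinor M S (σ * Equiv.swap i₀ j)) := by
  rw [signedMinor, Perm.sum_supportedIn_insert h]
  refine sum_congr rfl fun j _ => ?_
  rw [signedMinor, mul_sum, smul_sum]
  refine sum_congr rfl fun u hu => ?_
  rw [prod_insert h, Perm.mul_apply, Perm.mul_apply, Perm.apply_eq_of_mem_supportedIn hu h,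
    swap_apply_left, map_mul, mul_smul, mul_smul_comm, mul_assoc]

theorem signedMinor_submatrix {w : Perm m} (hw : w ∈ Perm.supportedIn S) :
    signedMinor (M.submatrix w id) S σ = sign w • signedMinor M S σ := by
  rw [signedMinor, ← Perm.sum_supportedIn_mul_right hw, signedMinor, smul_sum]
  refine sum_congr rfl fun u _ => ?_
  have hw' : {a | w a ≠ a} ⊆ S := fun a ha => Perm.mem_supportedIn.1 hw (Perm.mem_support.2 ha)
  rw [← mul_assoc, map_mul, mul_comm, mul_smul]
  congr 2
  exact w.prod_comp S (fun k => M k ((σ * u) k)) hw'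

/-- Swapping the rows `i₀` and `i` of `M` turns the left side into an expansion of
`signedMinor` along row `i₀`. -/
theorem sum_sign_swap_smul_mul_signedMinor_updateRow {i₀ i : m} (h : i₀ ∉ S) (hi : i ∈ S) :
    ∑ j ∈ insert i₀ S, sign (Equiv.swap i₀ j) •
        (M i (σ j) * signedMinor (M.updateRow i (M i₀)) S (σ * Equiv.swap i₀ j))
      = -signedMinor M (insert i₀ S) σ := by
  have hne : i₀ ≠ i := ne_of_mem_of_not_mem hi h |>.symm
  have hrows : ∀ k ∈ S, M.submatrix (Equiv.swap i₀ i) id k = M.updateRow i (M i₀) k := by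
    intro k hk
    rcases eq_or_ne k i with rfl | hki
    · ext; simp
    · rw [updateRow_ne hki]
      ext
      simp [swap_apply_of_ne_of_ne (ne_of_mem_of_not_mem hk h) hki]
  calc _ = signedMinor (M.submatrix (Equiv.swap i₀ i) id) (insert i₀ S) σ := by
        rw [signedMinor_insert h]
        refine sum_congr rfl fun j _ => ?_
        rw [signedMinor_congr hrows]
        simp
    _ = -signedMinor M (insert i₀ S) σ := by
        rw [signedMinor_submatrix (Perm.swap_mem_supportedIn (mem_insert_self _ _)
          (mem_insert_of_mem hi)), Perm.sign_swap hne, Units.neg_smul, one_smul]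

theorem det_mul_det_adjugate {m A : Type*} [Fintype m] [DecidableEq m] [CommRing A]
    (M : Matrix m m A) : det M * det (adjugate M) = det M ^ Fintype.card m := by
  rw [← det_mul, mul_adjugate, det_smul, det_one, mul_one]

end Matrix

namespace MvPolynomial

theorem commute_pderiv {σ R : Type*} [CommSemiring R] (i j : σ) :
    Commute (pderiv i : Derivation R (MvPolynomial σ R) _).toLinearMap (pderiv j).toLinearMap :=
  LinearMap.ext (pderiv_comm' i j)

variable {m R : Type*} [DecidableEq m] [CommRing R]

noncomputable def pderivProd (S : Finset m) (γ : Perm m) : Module.End R (MvPolynomial (m × m) R) :=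
  S.noncommProd (fun i => (pderiv (γ i, i)).toLinearMap) fun _ _ _ _ _ => commute_pderiv _ _

theorem pderivProd_insert {S : Finset m} {i₀ : m} (h : i₀ ∉ S) (γ : Perm m) :
    pderivProd (insert i₀ S) γ
      = (pderiv (γ i₀, i₀)).toLinearMap * (pderivProd S γ : Module.End R _) :=
  noncommProd_insert_of_notMem _ _ _ _ h

variable [Fintype m]

/-- `signedMinor` with the partial derivatives `∂/∂x_{ij}` as matrix entries, applied to `f`. -/
noncomputable def minorPderiv (S : Finset m) (σ : Perm m) (f : MvPolynomial (m × m) R) :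
    MvPolynomial (m × m) R :=
  ∑ u ∈ Perm.supportedIn S, sign u • pderivProd S (σ * u) f

theorem minorPderiv_empty (σ : Perm m) (f : MvPolynomial (m × m) R) : minorPderiv ∅ σ f = f := by
  simp [minorPderiv, Perm.supportedIn_empty, pderivProd]

theorem minorPderiv_insert {S : Finset m} {i₀ : m} (h : i₀ ∉ S) (σ : Perm m)
    (f : MvPolynomial (m × m) R) :
    minorPderiv (insert i₀ S) σ f
      = ∑ j ∈ insert i₀ S,
          sign (swap i₀ j) • pderiv (σ j, i₀) (minorPderiv S (σ * swap i₀ j) f) := by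
  rw [minorPderiv, Perm.sum_supportedIn_insert h]
  refine sum_congr rfl fun j _ => ?_
  rw [minorPderiv, map_sum, smul_sum]
  refine sum_congr rfl fun u hu => ?_
  rw [pderivProd_insert h, Module.End.mul_apply, Perm.mul_apply, Perm.mul_apply,
    Perm.apply_eq_of_mem_supportedIn hu h, swap_apply_left, Units.smul_def, Units.smul_def,
    Units.smul_def, map_zsmul, map_mul, Units.val_mul, mul_smul, mul_assoc]
  rfl

end MvPolynomial

namespace Matrix

variable {m R : Type*} [Fintype m] [DecidableEq m] [CommRing R]

local notation "𝕏" => mvPolynomialX m m R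

theorem pderiv_adjugate_mvPolynomialX_eq_zero (a b k : m) :
    pderiv (a, b) (adjugate 𝕏 k a) = 0 := by
  rw [adjugate_apply]
  refine (pderiv (a, b)).map_det_eq_zero_s2 fun i j => ?_
  rcases eq_or_ne i a with rfl | h
  · rw [updateRow_self, Pi.single_apply]
    split_ifs <;> simp
  · rw [updateRow_ne h, mvPolynomialX_apply, pderiv_X_of_ne (by simp [h])]

theorem pderiv_det_mvPolynomialX (a b : m) : pderiv (a, b) (det 𝕏) = adjugate 𝕏 b a := by
  have hrow : det 𝕏 = ∑ k, 𝕏 a k * adjugate 𝕏 k a := by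
    rw [← mul_apply, mul_adjugate, smul_apply, one_apply_eq, smul_eq_mul, mul_one]
  simp [hrow, pderiv_adjugate_mvPolynomialX_eq_zero, pderiv_X, Pi.single_apply]

theorem sum_mvPolynomialX_mul_pderiv_adjugate (a b k l : m) :
    ∑ p, 𝕏 k p * pderiv (a, b) (adjugate 𝕏 p l)
      = (if k = l then adjugate 𝕏 b a else 0) - (if k = a then adjugate 𝕏 b l else 0) := by
  have hprod : pderiv (a, b) ((𝕏 * adjugate 𝕏) k l) = if k = l then adjugate 𝕏 b a else 0 := by
    rw [mul_adjugate, smul_apply, one_apply]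
    split_ifs <;> simp [pderiv_det_mvPolynomialX]
  rw [mul_apply, map_sum] at hprod
  simp only [pderiv_mul, sum_add_distrib, mvPolynomialX_apply, pderiv_X, Pi.single_apply,
    Prod.mk.injEq, ite_mul, one_mul, zero_mul] at hprod
  rw [← hprod]
  simp [ite_and]

theorem det_mul_pderiv_adjugate_mvPolynomialX (a b k l : m) :
    det 𝕏 * pderiv (a, b) (adjugate 𝕏 k l)
      = adjugate 𝕏 k l * adjugate 𝕏 b a - adjugate 𝕏 k a * adjugate 𝕏 b l := by
  calc det 𝕏 * pderiv (a, b) (adjugate 𝕏 k l)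
      = ∑ p, (adjugate 𝕏 * 𝕏) k p * pderiv (a, b) (adjugate 𝕏 p l) := by
        simp [adjugate_mul, one_apply, ite_mul]
    _ = ∑ q, adjugate 𝕏 k q * ∑ p, 𝕏 q p * pderiv (a, b) (adjugate 𝕏 p l) := by
        simp only [mul_apply, sum_mul, mul_sum, mul_assoc]
        exact sum_comm
    _ = _ := by
        simp only [sum_mvPolynomialX_mul_pderiv_adjugate, mul_sub, sum_sub_distrib, mul_ite,
          mul_zero, sum_ite_eq', mem_univ, if_true]

theorem det_mul_pderiv_prod_adjugate_mvPolynomialX (S : Finset m) (g : m → m) (p b : m) :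
    det 𝕏 * pderiv (p, b) (∏ k ∈ S, adjugate 𝕏 k (g k))
      = #S • (adjugate 𝕏 b p * ∏ k ∈ S, adjugate 𝕏 k (g k))
        - ∑ i ∈ S, adjugate 𝕏 i p * ∏ k ∈ S, (adjugate 𝕏).updateRow i (adjugate 𝕏 b) k (g k) := by
  have hterm : ∀ i ∈ S, det 𝕏 * ((∏ k ∈ S.erase i, adjugate 𝕏 k (g k))
        • pderiv (p, b) (adjugate 𝕏 i (g i)))
      = adjugate 𝕏 b p * ∏ k ∈ S, adjugate 𝕏 k (g k)
        - adjugate 𝕏 i p * ∏ k ∈ S, (adjugate 𝕏).updateRow i (adjugate 𝕏 b) k (g k) := by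
    intro i hi
    rw [smul_eq_mul, mul_left_comm, det_mul_pderiv_adjugate_mvPolynomialX,
      prod_updateRow_of_mem hi, ← mul_prod_erase S _ hi]
    ring
  rw [Derivation.leibniz_finset_prod, mul_sum, sum_congr rfl hterm, sum_sub_distrib, sum_const]

theorem det_mul_pderiv_signedMinor_adjugate_mvPolynomialX (S : Finset m) (τ : Perm m) (p b : m) :
    det 𝕏 * pderiv (p, b) (signedMinor (adjugate 𝕏) S τ)
      = #S • (adjugate 𝕏 b p * signedMinor (adjugate 𝕏) S τ)
        - ∑ i ∈ S, adjugate 𝕏 i p * signedMinor ((adjugate 𝕏).updateRow i (adjugate 𝕏 b)) S τ := by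
  simp only [signedMinor, map_sum, mul_sum, smul_sum]
  rw [sum_comm (s := S), ← sum_sub_distrib]
  refine sum_congr rfl fun u _ => ?_
  rw [Units.smul_def, map_zsmul, mul_smul_comm, det_mul_pderiv_prod_adjugate_mvPolynomialX,
    smul_sub, smul_sum, mul_smul_comm, smul_comm]
  simp only [Units.smul_def, mul_smul_comm]

theorem det_pow_succ_mul_pderiv_minorPderiv {α : ℕ} {S : Finset m} {τ : Perm m}
    (h : det 𝕏 ^ #S * minorPderiv S τ (det 𝕏 ^ α)
      = α.ascFactorial #S * (det 𝕏 ^ α * signedMinor (adjugate 𝕏) S τ)) (p b : m) :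
    det 𝕏 ^ (#S + 1) * pderiv (p, b) (minorPderiv S τ (det 𝕏 ^ α))
      = α.ascFactorial #S * (det 𝕏 ^ α * (α * adjugate 𝕏 b p * signedMinor (adjugate 𝕏) S τ
          - ∑ i ∈ S, adjugate 𝕏 i p
              * signedMinor ((adjugate 𝕏).updateRow i (adjugate 𝕏 b)) S τ)) := by
  rw [(pderiv (p, b)).pow_succ_mul_apply_of_pow_mul_eq h, pderiv_det_mvPolynomialX,
    det_mul_pderiv_signedMinor_adjugate_mvPolynomialX, nsmul_eq_mul]
  ring

theorem det_pow_card_mul_minorPderiv_det_pow (α : ℕ) (S : Finset m) (σ : Perm m) :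
    det 𝕏 ^ #S * minorPderiv S σ (det 𝕏 ^ α)
      = α.ascFactorial #S * (det 𝕏 ^ α * signedMinor (adjugate 𝕏) S σ) := by
  induction S using Finset.induction_on generalizing σ with
  | empty => simp [minorPderiv_empty, signedMinor_empty]
  | insert i₀ S h ih =>
    set Y := adjugate 𝕏
    have hcross : ∑ j ∈ insert i₀ S, sign (Equiv.swap i₀ j) •
          ∑ i ∈ S, Y i (σ j) * signedMinor (Y.updateRow i (Y i₀)) S (σ * Equiv.swap i₀ j)
        = -(#S • signedMinor Y (insert i₀ S) σ) := by
      simp only [smul_sum]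
      rw [sum_comm, sum_congr rfl fun i hi => sum_sign_swap_smul_mul_signedMinor_updateRow h hi,
        sum_neg_distrib, sum_const]
    calc det 𝕏 ^ #(insert i₀ S) * minorPderiv (insert i₀ S) σ (det 𝕏 ^ α)
        = ∑ j ∈ insert i₀ S, sign (Equiv.swap i₀ j) • (det 𝕏 ^ (#S + 1)
            * pderiv (σ j, i₀) (minorPderiv S (σ * Equiv.swap i₀ j) (det 𝕏 ^ α))) := by
          rw [card_insert_of_notMem h, minorPderiv_insert h, mul_sum]
          simp only [mul_smul_comm]
      _ = α.ascFactorial #S * (det 𝕏 ^ α * (α * signedMinor Y (insert i₀ S) σ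
            - ∑ j ∈ insert i₀ S, sign (Equiv.swap i₀ j) • ∑ i ∈ S,
                Y i (σ j) * signedMinor (Y.updateRow i (Y i₀)) S (σ * Equiv.swap i₀ j))) := by
          simp only [det_pow_succ_mul_pderiv_minorPderiv (ih _), signedMinor_insert h, mul_sum,
            smul_sum, ← sum_sub_distrib, mul_sub, smul_sub, mul_smul_comm, mul_assoc]
          rfl
      _ = α.ascFactorial #(insert i₀ S) * (det 𝕏 ^ α * signedMinor Y (insert i₀ S) σ) := by
          rw [hcross, card_insert_of_notMem h, Nat.ascFactorial_succ, nsmul_eq_mul]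
          push_cast
          ring

end Matrix

namespace Equiv.Perm

variable {m : Type*} [Fintype m]

noncomputable def graphExponent (σ : Perm m) : m × m →₀ ℕ :=
  ∑ i, Finsupp.single (σ i, i) 1

theorem graphExponent_apply_self (σ : Perm m) (i : m) : graphExponent σ (σ i, i) = 1 := by
  rw [graphExponent, Finsupp.finsetSum_apply, sum_eq_single i (fun j _ hj => ?_) (by simp)]
  · simp
  · exact Finsupp.single_eq_of_ne (by simp [Ne.symm hj])

theorem support_graphExponent [DecidableEq m] (σ : Perm m) :
    (graphExponent σ).support
      = univ.map ⟨fun i => (σ i, i), fun _ _ h => (Prod.ext_iff.1 h).2⟩ := by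
  rw [graphExponent, Finsupp.support_sum_eq_biUnion]
  · ext v
    simp only [Finsupp.support_single _ one_ne_zero, mem_biUnion, mem_univ, mem_singleton,
      true_and, mem_map]
    exact exists_congr fun _ => eq_comm
  · intro i j hij
    simp [hij]

end Equiv.Perm

theorem Matrix.det_mvPolynomialX_eq_sum_monomial {m : Type*} [Fintype m] [DecidableEq m]
    (R : Type*) [CommRing R] :
    det (mvPolynomialX m m R) = ∑ σ : Perm m, monomial σ.graphExponent ((sign σ : ℤ) : R) := by
  rw [det_apply]
  refine sum_congr rfl fun σ _ => ?_
  simp [Perm.graphExponent, monomial_sum_index, Units.smul_def, zsmul_eq_mul, X]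

namespace MvPolynomial

theorem diffOp_eq_sum_of_support_subset {σ : Type*} {p : MvPolynomial σ ℂ} {T : Finset (σ →₀ ℕ)}
    (h : p.support ⊆ T) (f : MvPolynomial σ ℂ) : diffOp p f = ∑ e ∈ T, p.coeff e • monOp e f :=
  sum_subset h fun e _ he => by rw [notMem_support_iff.1 he, zero_smul]

theorem diffOp_sum_monomial {σ ι : Type*} (s : Finset ι) (e : ι → σ →₀ ℕ) (c : ι → ℂ)
    (f : MvPolynomial σ ℂ) :
    diffOp (∑ i ∈ s, monomial (e i) (c i)) f = ∑ i ∈ s, c i • monOp (e i) f := by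
  classical
  have hsupp : (∑ i ∈ s, monomial (e i) (c i)).support ⊆ s.image e :=
    support_sum.trans <| biUnion_subset.2 fun i hi =>
      support_monomial_subset.trans (singleton_subset_iff.2 (mem_image_of_mem e hi))
  rw [diffOp_eq_sum_of_support_subset hsupp]
  simp only [coeff_sum, coeff_monomial, sum_smul, ite_smul, zero_smul]
  rw [sum_comm]
  exact sum_congr rfl fun i hi => sum_ite_eq _ _ _ |>.trans (if_pos (mem_image_of_mem e hi))

variable {m : Type*} [Fintype m] [DecidableEq m]

theorem monOp_graphExponent (σ : Perm m) : monOp σ.graphExponent = pderivProd univ σ := by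
  refine (noncommProd_congr σ.support_graphExponent (g := fun v => (pderiv v).toLinearMap)
    (fun v hv => ?_) _).trans ?_
  · obtain ⟨i, -, rfl⟩ := mem_map.1 hv
    change (pderiv (σ i, i)).toLinearMap ^ σ.graphExponent (σ i, i) = _
    rw [Perm.graphExponent_apply_self, pow_one]
    rfl
  · simp only [Finset.noncommProd, map_val, Multiset.map_map]
    rfl

theorem diffOp_det_mvPolynomialX (f : MvPolynomial (m × m) ℂ) :
    diffOp (det (mvPolynomialX m m ℂ)) f = minorPderiv univ 1 f := by
  rw [det_mvPolynomialX_eq_sum_monomial, diffOp_sum_monomial, minorPderiv, Perm.supportedIn_univ]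
  refine sum_congr rfl fun σ _ => ?_
  rw [monOp_graphExponent, one_mul, Int.cast_smul_eq_zsmul, Units.smul_def]

end MvPolynomial

theorem cayley_identity_general (n : ℕ) (α : ℕ) (hα : 1 ≤ α) :
    diffOp (Matrix.det (Matrix.of fun i j : Fin n => (X (i, j) : MvPolynomial (Fin n × Fin n) ℂ)))
        ((Matrix.det (Matrix.of fun i j : Fin n => (X (i, j) : MvPolynomial (Fin n × Fin n) ℂ))) ^ α)
    = (∏ i ∈ Finset.range n, (α + i)) •
        (Matrix.det (Matrix.of fun i j : Fin n => (X (i, j) : MvPolynomial (Fin n × Fin n) ℂ)))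
          ^ (α - 1) := by
  obtain ⟨β, rfl⟩ := Nat.exists_eq_add_of_le' hα
  rw [show (Matrix.of fun i j : Fin n => (X (i, j) : MvPolynomial (Fin n × Fin n) ℂ))
      = mvPolynomialX (Fin n) (Fin n) ℂ from rfl, diffOp_det_mvPolynomialX,
    ← Nat.ascFactorial_eq_prod_range, nsmul_eq_mul, Nat.add_sub_cancel]
  have hmain := det_pow_card_mul_minorPderiv_det_pow (R := ℂ) (β + 1) (univ : Finset (Fin n)) 1
  have hadj := det_mul_det_adjugate (mvPolynomialX (Fin n) (Fin n) ℂ)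
  rw [signedMinor_univ_one, card_univ, Fintype.card_fin] at hmain
  rw [Fintype.card_fin] at hadj
  set Δ := det (mvPolynomialX (Fin n) (Fin n) ℂ)
  refine mul_left_cancel₀ (pow_ne_zero (n + 1) (det_mvPolynomialX_ne_zero (Fin n) ℂ)) ?_
  linear_combination Δ * hmain + ((β + 1).ascFactorial n : MvPolynomial _ ℂ) * Δ ^ (β + 1) * hadj

/-- Cayley's identity: for the generic `n × n` matrix `X = (x_{ij})` and every
integer `α ≥ 1`, one has `det(∂)((det X)^α) = α(α+1)⋯(α+n−1) ⬝ (det X)^{α−1}`. -/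
theorem cayley_identity (n : ℕ) (hn : 1 ≤ n) (α : ℕ) (hα : 1 ≤ α) :
    diffOp (Matrix.det (Matrix.of fun i j : Fin n => (X (i, j) : MvPolynomial (Fin n × Fin n) ℂ)))
        ((Matrix.det (Matrix.of fun i j : Fin n => (X (i, j) : MvPolynomial (Fin n × Fin n) ℂ))) ^ α)
    = (∏ i ∈ Finset.range n, (α + i)) •
        (Matrix.det (Matrix.of fun i j : Fin n => (X (i, j) : MvPolynomial (Fin n × Fin n) ℂ)))
          ^ (α - 1) :=
  cayley_identity_general n α hα
end

section
/- Let n ≥ 1 and let U = { u : u a skew-symmetric (2n+1)×(2n+1) complex matrix with u_{12} ≠ 0 }. Define π(u) = (t, c, r, M) by t = u_{12}, c = (u_{13},…,u_{1,2n+1}), r = (u_{23},…,u_{2,2n+1}), and M the (2n−1)×(2n−1) matrix with M_{ij} = Pf_{{1,2,i+2,j+2}}(u)/u_{12} = u_{i+2,j+2} − (u_{1,i+2}·u_{2,j+2} − u_{1,j+2}·u_{2,i+2})/u_{12} for 1 ≤ i,j ≤ 2n−1, where Pf_{{1,2,i+2,j+2}}(u) is the Pfaffian of the principal 4×4 skew-symmetric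 submatrix of u on rows and columns 1,2,i+2,j+2. Then M is skew-symmetric, π is a bijection from U onto ℂ* × ℂ^{2n−1} × ℂ^{2n−1} × { skew-symmetric (2n−1)×(2n−1) complex matrices }, and π restricts to a bijection from { u ∈ U : rank(u) ≤ 2n−2 } onto ℂ* × ℂ^{2n−1} × ℂ^{2n−1} × { skew-symmetric M : rank(M) ≤ 2n−4 }. -/
/-!
Moving the indices `1, 2` to the front puts `u` in block form `[[t • J, B], [-Bᵀ, D]]`, where
`J = [[0, 1], [-1, 0]]` and `B` has rows `c` and `r`; then `M = D + Bᵀ (t • J)⁻¹ B` is the Schur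
complement of the invertible corner `t • J`. So `u` is recovered from `(t, c, r, M)` through
`D = M - Bᵀ (t • J)⁻¹ B`, skew-symmetry passes in both directions, and the LDU factorisation of the
block matrix gives `rank u = 2 + rank M`.
-/

open Matrix Module

theorem Submodule.finrank_prod {K M N : Type*} [Field K] [AddCommGroup M] [AddCommGroup N]
    [Module K M] [Module K N] [FiniteDimensional K M] [FiniteDimensional K N]
    (p : Submodule K M) (q : Submodule K N) :
    finrank K (p.prod q) = finrank K p + finrank K q := by
  let e : p.prod q ≃ₗ[K] p × q :=
    { toFun := fun x => (⟨x.1.1, x.2.1⟩, ⟨x.1.2, x.2.2⟩)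
      map_add' := fun _ _ => rfl
      map_smul' := fun _ _ => rfl
      invFun := fun y => ⟨(y.1.1, y.2.1), ⟨y.1.2, y.2.2⟩⟩
      left_inv := fun _ => rfl
      right_inv := fun _ => rfl }
  rw [e.finrank_eq, Module.finrank_prod]

namespace Matrix

variable {K : Type*} [Field K] {l m n o : Type*} [Fintype l] [Fintype m] [Fintype n] [Fintype o]

theorem rank_fromBlocks_zero_zero (A : Matrix l n K) (D : Matrix m o K) :
    (fromBlocks A 0 0 D).rank = A.rank + D.rank := by
  have hcomp : (fromBlocks A 0 0 D).mulVecLin =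
      (LinearEquiv.sumArrowLequivProdArrow l m K K).symm.toLinearMap ∘ₗ
        (A.mulVecLin.prodMap D.mulVecLin) ∘ₗ
        (LinearEquiv.sumArrowLequivProdArrow n o K K).toLinearMap := by
    ext v i
    cases i <;> simp only [mulVecBilin_apply, fromBlocks_mulVec, zero_mulVec, add_zero, zero_add,
      Sum.elim_inl, Sum.elim_inr] <;> rfl
  rw [rank, hcomp, LinearMap.range_comp, LinearEquiv.finrank_map_eq,
    LinearMap.range_comp_of_range_eq_top _ (LinearEquiv.range _), LinearMap.range_prodMap,
    Submodule.finrank_prod]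
  rfl

variable [DecidableEq l] [DecidableEq m]

theorem rank_fromBlocks_of_isUnit_det₁₁ (A : Matrix l l K) (B : Matrix l m K) (C : Matrix m l K)
    (D : Matrix m m K) (hA : IsUnit A.det) :
    (fromBlocks A B C D).rank = Fintype.card l + (D - C * A⁻¹ * B).rank := by
  let := A.invertibleOfIsUnitDet hA
  rw [fromBlocks_eq_of_invertible₁₁, rank_mul_eq_left_of_isUnit_det,
    rank_mul_eq_right_of_isUnit_det, rank_fromBlocks_zero_zero,
    rank_of_isUnit _ ((isUnit_iff_isUnit_det A).mpr hA), invOf_eq_nonsing_inv]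
  all_goals simp

end Matrix

namespace PfaffianChart

variable {K ι m : Type*} [Field K] (p q : ι) (e : m → ι)

def chartMatrix (u : Matrix ι ι K) : Matrix m m K :=
  of fun i j => u (e i) (e j) - (u p (e i) * u q (e j) - u p (e j) * u q (e i)) / u p q

def chart (u : {u : Matrix ι ι K // uᵀ = -u ∧ u p q ≠ 0}) :
    {t : K // t ≠ 0} × (m → K) × (m → K) × Matrix m m K :=
  (⟨u.1 p q, u.2.2⟩, fun i => u.1 p (e i), fun i => u.1 q (e i), chartMatrix p q e u.1)

theorem chartMatrix_transpose {u : Matrix ι ι K} (hu : uᵀ = -u) :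
    (chartMatrix p q e u)ᵀ = -chartMatrix p q e u := by
  have h : ∀ i j, u j i = -u i j := fun i j => by simpa using congrFun₂ hu i j
  ext i j
  simp only [chartMatrix, transpose_apply, Matrix.neg_apply, of_apply, h (e i) (e j)]
  ring

section Blocks

variable (t : K) (c r : m → K) (M : Matrix m m K)

def chartBlocks : Matrix (Fin 2 ⊕ m) (Fin 2 ⊕ m) K :=
  fromBlocks !![0, t; -t, 0] (of ![c, r]) (-(of ![c, r])ᵀ)
    (M + t⁻¹ • (vecMulVec c r - vecMulVec r c))

theorem chartBlocks_transpose (hM : Mᵀ = -M) : (chartBlocks t c r M)ᵀ = -chartBlocks t c r M := by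
  have hJ : (!![0, t; -t, 0])ᵀ = -!![0, t; -t, 0] := by
    ext i j; fin_cases i <;> fin_cases j <;> simp
  rw [chartBlocks, fromBlocks_transpose, fromBlocks_neg, hJ, transpose_neg, transpose_transpose,
    neg_neg, transpose_add, hM, transpose_smul, transpose_sub, transpose_vecMulVec,
    transpose_vecMulVec]
  congr 1
  module

theorem rank_chartBlocks [Fintype m] [DecidableEq m] (ht : t ≠ 0) :
    (chartBlocks t c r M).rank = M.rank + 2 := by
  have hJ : IsUnit (!![0, t; -t, 0]).det := by simpa [det_fin_two_of] using ht
  have hJinv : (!![0, t; -t, 0])⁻¹ = !![0, -t⁻¹; t⁻¹, 0] :=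
    inv_eq_left_inv (by ext i j; fin_cases i <;> fin_cases j <;> simp [ht])
  have hschur : M + t⁻¹ • (vecMulVec c r - vecMulVec r c) -
      -(of ![c, r])ᵀ * (!![0, t; -t, 0])⁻¹ * of ![c, r] = M := by
    ext i j
    simp only [hJinv, Matrix.neg_mul, Matrix.sub_apply, Matrix.add_apply, Matrix.smul_apply,
      Matrix.neg_apply, mul_apply, transpose_apply, of_apply, Fin.sum_univ_two, cons_val',
      cons_val_zero, cons_val_one, cons_val_fin_one, vecMulVec_apply, smul_eq_mul]
    ring
  rw [chartBlocks, rank_fromBlocks_of_isUnit_det₁₁ _ _ _ _ hJ, hschur, Fintype.card_fin, add_comm]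

end Blocks

variable {p q e} (hpqe : Function.Bijective (Sum.elim ![p, q] e))

noncomputable def splitting : Fin 2 ⊕ m ≃ ι := Equiv.ofBijective _ hpqe

@[simp] theorem splitting_inl_zero : splitting hpqe (.inl 0) = p := rfl

@[simp] theorem splitting_inl_one : splitting hpqe (.inl 1) = q := rfl

@[simp] theorem splitting_inr (i : m) : splitting hpqe (.inr i) = e i := rfl

@[simp] theorem splitting_symm_p : (splitting hpqe).symm p = .inl 0 :=
  (splitting hpqe).symm_apply_eq.mpr rfl

@[simp] theorem splitting_symm_q : (splitting hpqe).symm q = .inl 1 :=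
  (splitting hpqe).symm_apply_eq.mpr rfl

@[simp] theorem splitting_symm_e (i : m) : (splitting hpqe).symm (e i) = .inr i :=
  (splitting hpqe).symm_apply_eq.mpr rfl

noncomputable def ofChart (t : K) (c r : m → K) (M : Matrix m m K) : Matrix ι ι K :=
  (chartBlocks t c r M).submatrix (splitting hpqe).symm (splitting hpqe).symm

variable (t : K) (c r : m → K) (M : Matrix m m K)

@[simp] theorem ofChart_p_q : ofChart hpqe t c r M p q = t := by
  simp [ofChart, chartBlocks]

@[simp] theorem ofChart_p_e (i : m) : ofChart hpqe t c r M p (e i) = c i := by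
  simp [ofChart, chartBlocks]

@[simp] theorem ofChart_q_e (i : m) : ofChart hpqe t c r M q (e i) = r i := by
  simp [ofChart, chartBlocks]

theorem ofChart_e_e (i j : m) :
    ofChart hpqe t c r M (e i) (e j) = M i j + (c i * r j - c j * r i) / t := by
  simp only [ofChart, chartBlocks, submatrix_apply, splitting_symm_e, fromBlocks_apply₂₂,
    Matrix.add_apply, Matrix.smul_apply, Matrix.sub_apply, vecMulVec_apply, smul_eq_mul]
  ring

theorem ofChart_transpose (hM : Mᵀ = -M) : (ofChart hpqe t c r M)ᵀ = -ofChart hpqe t c r M := by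
  rw [ofChart, transpose_submatrix, chartBlocks_transpose t c r M hM]
  rfl

theorem chartMatrix_ofChart (ht : t ≠ 0) : chartMatrix p q e (ofChart hpqe t c r M) = M := by
  ext i j
  simp only [chartMatrix, of_apply, ofChart_p_q, ofChart_p_e, ofChart_q_e, ofChart_e_e]
  field_simp
  ring

variable [NeZero (2 : K)]

theorem ofChart_chartMatrix {u : Matrix ι ι K} (hu : uᵀ = -u) :
    ofChart hpqe (u p q) (fun i => u p (e i)) (fun i => u q (e i)) (chartMatrix p q e u) = u := by
  have h : ∀ i j, u j i = -u i j := fun i j => by simpa using congrFun₂ hu i j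
  have hdiag : ∀ i, u i i = 0 := fun i =>
    (mul_eq_zero.mp (by linear_combination h i i : (2 : K) * u i i = 0)).resolve_left two_ne_zero
  ext i j
  obtain ⟨a, rfl⟩ := (splitting hpqe).surjective i
  obtain ⟨b, rfl⟩ := (splitting hpqe).surjective j
  rcases a with a | a <;> rcases b with b | b
  · fin_cases a <;> fin_cases b <;> simp [ofChart, chartBlocks, h p q, hdiag]
  · fin_cases a <;> simp [ofChart, chartBlocks]
  · fin_cases b <;> simp [ofChart, chartBlocks, h _ (e a)]
  · simp [ofChart_e_e, chartMatrix]

include hpqe in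
theorem chart_injective : Function.Injective (chart (K := K) p q e) := by
  intro u v huv
  simp only [chart, Prod.mk.injEq, Subtype.mk.injEq] at huv
  obtain ⟨ht, hc, hr, hM⟩ := huv
  apply Subtype.ext
  rw [← ofChart_chartMatrix hpqe u.2.1, ← ofChart_chartMatrix hpqe v.2.1, ht, hc, hr, hM]

include hpqe in
theorem bijOn_chart : Set.BijOn (chart (K := K) p q e) Set.univ {x | x.2.2.2ᵀ = -x.2.2.2} := by
  refine ⟨fun u _ => chartMatrix_transpose p q e u.2.1, (chart_injective hpqe).injOn, ?_⟩
  rintro ⟨⟨t, ht⟩, c, r, M⟩ hM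
  refine ⟨⟨ofChart hpqe t c r M, ofChart_transpose hpqe t c r M hM, by simpa using ht⟩, trivial, ?_⟩
  simp [chart, chartMatrix_ofChart hpqe t c r M ht]

variable [Fintype ι] [Fintype m] [DecidableEq m]

include hpqe in
theorem rank_eq_rank_chartMatrix_add_two (u : {u : Matrix ι ι K // uᵀ = -u ∧ u p q ≠ 0}) :
    u.1.rank = (chartMatrix p q e u.1).rank + 2 := by
  conv_lhs => rw [← ofChart_chartMatrix hpqe u.2.1]
  rw [ofChart, rank_submatrix, rank_chartBlocks _ _ _ _ u.2.2]

include hpqe in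
theorem bijOn_chart_of_rank_le (a b : ℤ) (hab : a = b + 2) :
    Set.BijOn (chart (K := K) p q e) {u | (u.1.rank : ℤ) ≤ a}
      {x | x.2.2.2ᵀ = -x.2.2.2 ∧ (x.2.2.2.rank : ℤ) ≤ b} := by
  have hrank := rank_eq_rank_chartMatrix_add_two (K := K) hpqe
  refine ⟨fun u hu => ⟨(bijOn_chart hpqe).mapsTo trivial, ?_⟩, (chart_injective hpqe).injOn, ?_⟩
  · have := hrank u
    simp only [Set.mem_ofPred_eq] at hu
    simp only [chart]
    omega
  · rintro x ⟨hM, hx⟩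
    obtain ⟨u, -, rfl⟩ := (bijOn_chart hpqe).surjOn hM
    have := hrank u
    simp only [chart] at hx
    refine ⟨u, ?_, rfl⟩
    simp only [Set.mem_ofPred_eq]
    omega

end PfaffianChart

theorem Fin.bijective_sumElim_zero_one_add_two {k N : ℕ} [NeZero N] (h : k + 2 = N) :
    Function.Bijective
      (Sum.elim ![(0 : Fin N), 1] fun a : Fin k => ⟨a.1 + 2, by have := a.2; omega⟩) := by
  have h1 : 1 % N = 1 := Nat.mod_eq_of_lt (by omega)
  rw [Fintype.bijective_iff_injective_and_card]
  refine ⟨?_, by simp; omega⟩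
  rintro (a | a) (b | b) hab <;> [fin_cases a <;> fin_cases b; fin_cases a; fin_cases b; skip] <;>
    simp [Fin.ext_iff] at hab ⊢ <;> omega

/-- For `n ≥ 1`, on the set `U` of skew-symmetric `(2n+1) × (2n+1)` complex matrices
with `u₁₂ ≠ 0`, the map `π(u) = (u₁₂, (u_{1,i+2})_i, (u_{2,i+2})_i, M)` with
`M_{ij} = u_{i+2,j+2} − (u_{1,i+2}·u_{2,j+2} − u_{1,j+2}·u_{2,i+2})/u₁₂` produces a
skew-symmetric matrix `M`, is a bijection from `U` onto
`ℂ* × ℂ^{2n−1} × ℂ^{2n−1} × {skew-symmetric (2n−1) × (2n−1) matrices}`, and restricts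
to a bijection from `{u ∈ U : rank(u) ≤ 2n−2}` onto
`ℂ* × ℂ^{2n−1} × ℂ^{2n−1} × {skew-symmetric M : rank(M) ≤ 2n−4}`. -/
theorem localization_of_pfaffian_variety (n : ℕ) (hn : 1 ≤ n) :
    let e : Fin (2 * n - 1) → Fin (2 * n + 1) := fun a => ⟨a.1 + 2, by have := a.2; omega⟩
    let π : {u : Matrix (Fin (2 * n + 1)) (Fin (2 * n + 1)) ℂ // uᵀ = -u ∧ u 0 1 ≠ 0} →
        {t : ℂ // t ≠ 0} × (Fin (2 * n - 1) → ℂ) × (Fin (2 * n - 1) → ℂ) ×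
          Matrix (Fin (2 * n - 1)) (Fin (2 * n - 1)) ℂ :=
      fun u =>
        (⟨u.1 0 1, u.2.2⟩,
         fun i => u.1 0 (e i),
         fun i => u.1 1 (e i),
         Matrix.of fun i j =>
           u.1 (e i) (e j) -
             (u.1 0 (e i) * u.1 1 (e j) - u.1 0 (e j) * u.1 1 (e i)) / u.1 0 1)
    (∀ u, ((π u).2.2.2)ᵀ = -(π u).2.2.2) ∧
    Set.BijOn π Set.univ {x | (x.2.2.2)ᵀ = -x.2.2.2} ∧
    Set.BijOn π {u | ((u.1.rank : ℤ) ≤ 2 * (n : ℤ) - 2)}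
      {x | (x.2.2.2)ᵀ = -x.2.2.2 ∧ ((x.2.2.2.rank : ℤ) ≤ 2 * (n : ℤ) - 4)} := by
  intro e π
  have hpqe : Function.Bijective (Sum.elim ![0, 1] e) :=
    Fin.bijective_sumElim_zero_one_add_two (by omega)
  exact ⟨fun u => PfaffianChart.chartMatrix_transpose 0 1 e u.2.1,
    PfaffianChart.bijOn_chart hpqe, PfaffianChart.bijOn_chart_of_rank_le hpqe _ _ (by ring)⟩
end

section
/- Let r ≥ 1 be an integer. Set Q(s,z) = (−z)·∏_{i=1}^{r−1} (s + r − i − z) and FQ(s,z) = (−z)·∏_{j=1}^{r−1} (−s − j − z) in ℂ[s,z]. There are unique polynomials Q_0(s),…,Q_r(s) ∈ ℂ[s] with Q(s,z) = ∑_{a=0}^{r} (−1)^{r−a} · Q_a(s) · [z]_{r−a}, and unique polynomials FQ_0(s),…,FQ_r(s) ∈ ℂ[s] with FQ(s,z) = ∑_{a=0}^{r} (−1)^{r−a} · FQ_a(s) · [z]_{r−a}. For every a ∈ {0,…,r} one has FQ_a(s) = Q_a(−s−r). -/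
/-!
Over a domain `R`, the signed falling factorials `(-1)^k [z]_k` have degree `k` and unit leading
coefficient, so they form a basis of `R[z]` adapted to the degree filtration; this gives existence
and uniqueness of both expansions. The substitution `s ↦ -s - r`, applied coefficientwise in `ℂ[s]`,
sends `Q(s,z)` to `FQ(s,z)` and fixes every `[z]_k`, so it carries the expansion of `Q` to an
expansion of `FQ`; by uniqueness, `FQ_a(s) = Q_a(-s - r)`.
-/

open Polynomial Finset

theorem LinearIndependent.existsUnique_eq_sum_smul {R M ι : Type*} [Ring R] [AddCommGroup M]
    [Module R M] [Fintype ι] {v : ι → M} (hv : LinearIndependent R v) {x : M}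
    (hx : x ∈ Submodule.span R (Set.range v)) : ∃! c : ι → R, x = ∑ i, c i • v i := by
  obtain ⟨c, hc⟩ := Submodule.mem_span_range_iff_exists_fun R |>.mp hx
  exact ⟨c, hc.symm, fun c' hc' =>
    funext <| Fintype.linearIndependent_iffₛ.mp hv c' c (hc' ▸ hc).symm⟩

namespace Polynomial

theorem descPochhammer_eq_prod_range (R : Type*) [CommRing R] (n : ℕ) :
    descPochhammer R n = ∏ i ∈ range n, (X - (i : R[X])) := by
  induction n with
  | zero => simp
  | succ n ih => rw [descPochhammer_succ_right, ih, prod_range_succ]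

theorem natDegree_prod_C_sub_X_le {R ι : Type*} [CommRing R] (s : Finset ι) (c : ι → R) :
    (∏ i ∈ s, (C (c i) - X)).natDegree ≤ s.card := by
  refine (natDegree_prod_le s _).trans ?_
  simpa using sum_le_card_nsmul s _ 1 fun i _ =>
    (natDegree_sub_le _ _).trans (by simp [natDegree_X_le])

section SignedDescPochhammer

variable (R : Type*) [Ring R] [Nontrivial R] [NoZeroDivisors R]

noncomputable def signedDescPochhammer : Sequence R where
  elems' k := (-1) ^ k * descPochhammer R k
  degree_eq' k := by
    rcases neg_one_pow_eq_or R[X] k with h | h <;>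
      simp [h, degree_eq_natDegree (monic_descPochhammer R k).ne_zero]

theorem signedDescPochhammer_apply (k : ℕ) :
    signedDescPochhammer R k = (-1) ^ k * descPochhammer R k := rfl

theorem isUnit_leadingCoeff_signedDescPochhammer (k : ℕ) :
    IsUnit (signedDescPochhammer R k).leadingCoeff := by
  rcases neg_one_pow_eq_or R[X] k with h | h <;>
    simp [signedDescPochhammer_apply, h, (monic_descPochhammer R k).leadingCoeff]

end SignedDescPochhammer

noncomputable def fallingFactorialExpansion {R : Type*} [Ring R] (r : ℕ) (P : Fin (r + 1) → R) :
    R[X] :=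
  ∑ a : Fin (r + 1), (-1) ^ (r - a.1) * C (P a) * descPochhammer R (r - a.1)

theorem map_fallingFactorialExpansion {R S : Type*} [Ring R] [Ring S] (f : R →+* S) {r : ℕ}
    (P : Fin (r + 1) → R) :
    (fallingFactorialExpansion r P).map f = fallingFactorialExpansion r (f ∘ P) := by
  simp [fallingFactorialExpansion, Polynomial.map_sum]

section Expansion

variable {R : Type*} [CommRing R] [IsDomain R]

theorem fallingFactorialExpansion_eq_sum_smul {r : ℕ} (P : Fin (r + 1) → R) :
    fallingFactorialExpansion r P = ∑ a, P a • signedDescPochhammer R (r - a.1) := by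
  simp only [fallingFactorialExpansion, signedDescPochhammer_apply, smul_eq_C_mul]
  exact sum_congr rfl fun _ _ => by ring

theorem existsUnique_eq_fallingFactorialExpansion {r : ℕ} {F : R[X]}
    (hF : F.natDegree ≤ r) : ∃! P : Fin (r + 1) → R, F = fallingFactorialExpansion r P := by
  set T := signedDescPochhammer R
  have hrev : Function.Injective fun a : Fin (r + 1) => r - a.1 := fun a b h => by
    simp only at h; omega
  have hspan : Set.range (fun a : Fin (r + 1) => T (r - a.1)) = T '' Set.Iic r := by
    ext p
    refine ⟨fun ⟨a, ha⟩ => ⟨r - a.1, Nat.sub_le r a, ha⟩, fun ⟨k, hk, hp⟩ => ?_⟩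
    exact ⟨⟨r - k, by omega⟩, by simpa [Nat.sub_sub_self (Set.mem_Iic.mp hk)] using hp⟩
  have hF' : F ∈ Submodule.span R (Set.range fun a : Fin (r + 1) => T (r - a.1)) := by
    rw [hspan, T.span_degreeLE fun i _ => isUnit_leadingCoeff_signedDescPochhammer R i,
      mem_degreeLE]
    exact (degree_le_natDegree).trans (by exact_mod_cast hF)
  simpa only [fallingFactorialExpansion_eq_sum_smul, Function.comp_def] using
    (T.linearIndependent.comp _ hrev).existsUnique_eq_sum_smul hF'

end Expansion

end Polynomial

/-- Working in `ℂ[s][z]`: for `Q(s,z) = (−z)·∏_{i=1}^{r−1}(s + r − i − z)` and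
`FQ(s,z) = (−z)·∏_{j=1}^{r−1}(−s − j − z)` there are unique polynomials
`Q_0,…,Q_r ∈ ℂ[s]` with `Q(s,z) = ∑_{a=0}^r (−1)^{r−a} Q_a(s) [z]_{r−a}` and unique
`FQ_0,…,FQ_r ∈ ℂ[s]` with `FQ(s,z) = ∑_{a=0}^r (−1)^{r−a} FQ_a(s) [z]_{r−a}`, where
`[z]_k = z(z−1)⋯(z−k+1)`; and `FQ_a(s) = Q_a(−s−r)` for all `a`. -/
theorem capelli_eigenvalue_fourier_transform_submaximal (r : ℕ) (hr : 1 ≤ r) :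
    let ff : ℕ → Polynomial (Polynomial ℂ) :=
      fun a => ∏ i ∈ Finset.range a, (Polynomial.X - (i : Polynomial (Polynomial ℂ)))
    let expandsTo : Polynomial (Polynomial ℂ) → (Fin (r + 1) → Polynomial ℂ) → Prop :=
      fun F P => F = ∑ a : Fin (r + 1),
        (-1 : Polynomial (Polynomial ℂ)) ^ (r - a.1) * Polynomial.C (P a) * ff (r - a.1)
    let lhs : Polynomial (Polynomial ℂ) :=
      (-Polynomial.X) *
        ∏ i ∈ Finset.Icc 1 (r - 1),
          (Polynomial.C (Polynomial.X + Polynomial.C ((r : ℂ) - (i : ℂ))) - Polynomial.X)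
    let flhs : Polynomial (Polynomial ℂ) :=
      (-Polynomial.X) *
        ∏ j ∈ Finset.Icc 1 (r - 1),
          (Polynomial.C (-Polynomial.X - Polynomial.C ((j : ℂ))) - Polynomial.X)
    (∃! Q : Fin (r + 1) → Polynomial ℂ, expandsTo lhs Q) ∧
    (∃! FQ : Fin (r + 1) → Polynomial ℂ, expandsTo flhs FQ) ∧
    (∀ Q FQ : Fin (r + 1) → Polynomial ℂ, expandsTo lhs Q → expandsTo flhs FQ →
      ∀ a : Fin (r + 1), FQ a = (Q a).comp (-Polynomial.X - Polynomial.C (r : ℂ))) := by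
  intro ff expandsTo lhs flhs
  have hexpandsTo (F : ℂ[X][X]) (P : Fin (r + 1) → ℂ[X]) :
      expandsTo F P ↔ F = fallingFactorialExpansion r P := by
    simp only [expandsTo, ff, fallingFactorialExpansion, descPochhammer_eq_prod_range]
  set σ : ℂ[X] →+* ℂ[X] := compRingHom (-X - C (r : ℂ))
  have hlhs_natDegree : lhs.natDegree ≤ r := by
    refine natDegree_mul_le.trans ?_
    have := natDegree_prod_C_sub_X_le (Icc 1 (r - 1)) fun i => X + C ((r : ℂ) - (i : ℂ))
    simp only [natDegree_neg, natDegree_X, Nat.card_Icc] at this ⊢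
    omega
  have hmap_lhs : lhs.map σ = flhs := by
    simp [lhs, flhs, σ, Polynomial.map_prod]
  have hflhs_natDegree : flhs.natDegree ≤ r := hmap_lhs ▸ (natDegree_map_le).trans hlhs_natDegree
  have htransport (Q) (hQ : expandsTo lhs Q) : expandsTo flhs (σ ∘ Q) := by
    rw [hexpandsTo] at hQ ⊢
    rw [← hmap_lhs, hQ, map_fallingFactorialExpansion]
  simp only [hexpandsTo] at htransport ⊢
  refine ⟨existsUnique_eq_fallingFactorialExpansion hlhs_natDegree,
    existsUnique_eq_fallingFactorialExpansion hflhs_natDegree, fun Q FQ hQ hFQ => ?_⟩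
  exact congrFun ((existsUnique_eq_fallingFactorialExpansion hflhs_natDegree).unique hFQ
    (htransport Q hQ))
end
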